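/- Let M be a compact surface with first Betti number l ≥ 3, and let f : M → M be a homeomorphism inducing f₊ on H₁(M; ℝ) whose eigenvalues all have absolute value 1. Then there are infinitely many positive integers n with Lefschetz number L(fⁿ) < 0, where L(fⁿ) = 2 − tr(f₊ⁿ) in the closed orientable case and L(fⁿ) = 1 − tr(f₊ⁿ) in the case with boundary or non-orientable case; consequently f has a periodic point. -/

import Mathlib

open Matrix Polynomial Filter Topology

/-!
The powers `f₊ⁿ` have eigenvalues `λᵢⁿ` on the unit circle. Since the torus `(S¹)ˡ` is a compact
group, the powers of `(λ₁, …, λₗ)` come back arbitrarily close to `1` infinitely often, and then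
`tr f₊ⁿ = ∑ Re λᵢⁿ` is close to `l ≥ 3 > 2`, so `L(fⁿ) < 0`. The Lefschetz fixed point theorem
turns any such `n` into a periodic point.
-/

namespace Matrix

variable {n K : Type*} [Fintype n] [DecidableEq n] [Field K]

theorem det_aeval_eq_prod_eval {B : Matrix n n K} {μ : n → K}
    (hB : B.charpoly = ∏ i, (X - C (μ i))) {p : K[X]} (hp : p.Splits) :
    (aeval B p).det = ∏ i, p.eval (μ i) := by
  -- Both sides are multiplicative in `p`, so it suffices to compare them on the factors of `p`.
  let detAeval : K[X] →* K := detMonoidHom.comp (aeval B).toMonoidHom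
  let prodEval : K[X] →* K := ∏ i, (evalRingHom (μ i) : K[X] →* K)
  have hC (a : K) : detAeval (C a) = prodEval (C a) := by
    simp [detAeval, prodEval, aeval_C, algebraMap_eq_diagonal]
  have hXC (a : K) : detAeval (X - C a) = prodEval (X - C a) := by
    have hneg : aeval B (X - C a) = -(scalar n a - B) := by
      simp [aeval_C, algebraMap_eq_diagonal]
    have h : (aeval B (X - C a)).det = ∏ i, (X - C a).eval (μ i) := by
      rw [hneg, det_neg, ← eval_charpoly, hB, eval_prod, Fintype.card, ← Finset.prod_neg]
      simp
    simpa [detAeval, prodEval] using h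
  have key : detAeval p = prodEval p := by
    rw [hp.eq_prod_roots, map_mul, map_mul, hC, map_multiset_prod, map_multiset_prod,
      Multiset.map_map, Multiset.map_map]
    simp only [Function.comp_def, hXC]
  simpa [detAeval, prodEval] using key

theorem charpoly_pow_eq_prod [IsAlgClosed K] {B : Matrix n n K} {μ : n → K}
    (hB : B.charpoly = ∏ i, (X - C (μ i))) (k : ℕ) :
    (B ^ k).charpoly = ∏ i, (X - C (μ i ^ k)) := by
  refine Polynomial.funext fun a ↦ ?_
  have h : scalar n a - B ^ k = aeval B (C a - X ^ k) := by
    simp [aeval_C, algebraMap_eq_diagonal]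
  rw [eval_charpoly, h, det_aeval_eq_prod_eval hB (IsAlgClosed.splits _), eval_prod]
  simp

theorem trace_pow_eq_sum_pow [IsAlgClosed K] {B : Matrix n n K} {μ : n → K}
    (hB : B.charpoly = ∏ i, (X - C (μ i))) (k : ℕ) :
    (B ^ k).trace = ∑ i, μ i ^ k := by
  rw [trace_eq_sum_roots_charpoly, charpoly_pow_eq_prod hB,
    roots_prod _ _ (Finset.prod_ne_zero_iff.2 fun i _ ↦ X_sub_C_ne_zero _)]
  simp only [roots_X_sub_C, Multiset.bind_singleton]
  rfl

theorem trace_pow_eq_sum_re_pow {A : Matrix n n ℝ} {μ : n → ℂ}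
    (hA : (A.map (algebraMap ℝ ℂ)).charpoly = ∏ i, (X - C (μ i))) (k : ℕ) :
    (A ^ k).trace = ∑ i, (μ i ^ k).re := by
  have h := trace_pow_eq_sum_pow hA k
  rw [← (algebraMap ℝ ℂ).mapMatrix_apply, ← map_pow, RingHom.mapMatrix_apply,
    ← AddMonoidHom.map_trace] at h
  simpa using congrArg Complex.re h

end Matrix

theorem Complex.frequently_forall_pow_mem_nhds_one {ι : Type*} [Finite ι] {μ : ι → ℂ}
    (hμ : ∀ i, ‖μ i‖ = 1) {U : Set ℂ} (hU : U ∈ 𝓝 1) :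
    ∃ᶠ k in atTop, ∀ i, μ i ^ k ∈ U := by
  let z : ι → Circle := fun i ↦ ⟨μ i, mem_sphere_zero_iff_norm.2 (hμ i)⟩
  have hV : {w : ι → Circle | ∀ i, (w i : ℂ) ∈ U} ∈ 𝓝 1 :=
    eventually_all.2 fun i ↦ (continuous_subtype_val.comp (continuous_apply i)).tendsto 1 hU
  exact (mapClusterPt_one_atTop_pow z).frequently hV

theorem Matrix.frequently_lt_trace_pow {n : Type*} [Fintype n] [DecidableEq n] [Nonempty n]
    {A : Matrix n n ℝ} {μ : n → ℂ}
    (hA : (A.map (algebraMap ℝ ℂ)).charpoly = ∏ i, (X - C (μ i))) (hμ : ∀ i, ‖μ i‖ = 1)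
    {c : ℝ} (hc : c < Fintype.card n) :
    ∃ᶠ k in atTop, c < (A ^ k).trace := by
  have hcard : (0 : ℝ) < Fintype.card n := Nat.cast_pos.2 Fintype.card_pos
  have hU : {z : ℂ | c / Fintype.card n < z.re} ∈ 𝓝 1 :=
    (isOpen_lt continuous_const Complex.continuous_re).mem_nhds (by simpa [div_lt_one hcard])
  refine (Complex.frequently_forall_pow_mem_nhds_one hμ hU).mono fun k hk ↦ ?_
  calc c = ∑ _i : n, c / Fintype.card n := by simp [mul_div_cancel₀ _ hcard.ne']
    _ < ∑ i, (μ i ^ k).re := Finset.sum_lt_sum_of_nonempty Finset.univ_nonempty fun i _ ↦ hk i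
    _ = (A ^ k).trace := (trace_pow_eq_sum_re_pow hA k).symm

theorem infinitely_many_negative_lefschetz_and_periodic_point_general
    (M : Type*) [TopologicalSpace M]
    (f : M ≃ₜ M)
    (l : ℕ) (hl : 3 ≤ l)
    (A : Matrix (Fin l) (Fin l) ℝ)
    (lam : Fin l → ℂ)
    (hchar : (A.map (algebraMap ℝ ℂ)).charpoly = ∏ i, (X - C (lam i)))
    (habs : ∀ i, ‖lam i‖ = 1)
    (L : ℕ → ℝ)
    (hL : (∀ n, L n = 2 - (A ^ n).trace) ∨ (∀ n, L n = 1 - (A ^ n).trace))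
    (hLefschetz : ∀ n : ℕ, 0 < n → L n ≠ 0 → ∃ x : M, f^[n] x = x) :
    {n : ℕ | 0 < n ∧ L n < 0}.Infinite ∧ ∃ (x : M) (n : ℕ), 0 < n ∧ f^[n] x = x := by
  have : Nonempty (Fin l) := ⟨⟨0, by omega⟩⟩
  have htrace : ∃ᶠ n in atTop, 2 < (A ^ n).trace :=
    frequently_lt_trace_pow hchar habs (by rw [Fintype.card_fin]; exact_mod_cast hl)
  have hneg : ∃ᶠ n in atTop, 0 < n ∧ L n < 0 :=
    (htrace.and_eventually (eventually_gt_atTop 0)).mono fun n ⟨hn, hpos⟩ ↦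
      ⟨hpos, by rcases hL with h | h <;> rw [h n] <;> linarith⟩
  obtain ⟨n, hn, hLn⟩ := hneg.exists
  obtain ⟨x, hx⟩ := hLefschetz n hn hLn.ne
  exact ⟨Nat.frequently_atTop_iff_infinite.1 hneg, x, n, hn, hx⟩

/-- Let `M` be a compact surface with first Betti number `l ≥ 3` and `f` a
homeomorphism of `M` whose induced map on `H₁(M; ℝ)` is represented by a matrix `A` all of
whose complex eigenvalues have absolute value 1. With Lefschetz numbers
`L n = 2 - tr (A ^ n)` (closed orientable case) or `L n = 1 - tr (A ^ n)` (boundary or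
non-orientable case), and assuming the Lefschetz fixed point theorem for the iterates of `f`,
there are infinitely many `n > 0` with `L n < 0`, and `f` has a periodic point. -/
theorem infinitely_many_negative_lefschetz_and_periodic_point
    (M : Type*) [TopologicalSpace M] [CompactSpace M]
    (f : M ≃ₜ M)
    (l : ℕ) (hl : 3 ≤ l)
    (A : Matrix (Fin l) (Fin l) ℝ)
    (lam : Fin l → ℂ)
    (hchar : (A.map (algebraMap ℝ ℂ)).charpoly = ∏ i, (X - C (lam i)))
    (habs : ∀ i, ‖lam i‖ = 1)
    (L : ℕ → ℝ)
    (hL : (∀ n, L n = 2 - (A ^ n).trace) ∨ (∀ n, L n = 1 - (A ^ n).trace))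
    (hLefschetz : ∀ n : ℕ, 0 < n → L n ≠ 0 → ∃ x : M, f^[n] x = x) :
    {n : ℕ | 0 < n ∧ L n < 0}.Infinite ∧ ∃ (x : M) (n : ℕ), 0 < n ∧ f^[n] x = x :=
  infinitely_many_negative_lefschetz_and_periodic_point_general M f l hl A lam hchar habs L hL
    hLefschetz
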